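/- arXiv:2401.11979 — 6 statements merged into one kernel-verified Lean document; each statement's English description precedes it below -/
import Mathlib

section
/- Let R be a ring and C a class of right R-modules closed under direct summands (i.e., if M ∈ C and N is a direct summand of M then N ∈ C). If C is preenveloping (every module M admits a map f : M → C with C ∈ C such that every map from M to a module in C factors through f), then C is closed under arbitrary direct products. -/
open CategoryTheory

universe u

/-- A class of modules is preenveloping if every module has a `C`-preenvelope. -/
def Preenveloping {R : Type u} [Ring R] (C : ModuleCat.{u} R → Prop) : Prop :=
  ∀ M : ModuleCat.{u} R, ∃ (E : ModuleCat.{u} R) (f : M ⟶ E), C E ∧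
    ∀ (E' : ModuleCat.{u} R), C E' → ∀ g : M ⟶ E', ∃ h : E ⟶ E', f ≫ h = g

/-- A class of modules is closed under direct summands. -/
def ClosedUnderSummands {R : Type u} [Ring R] (C : ModuleCat.{u} R → Prop) : Prop :=
  ∀ (M N : ModuleCat.{u} R), C M → ∀ (i : N ⟶ M) (r : M ⟶ N), i ≫ r = 𝟙 N → C N

/-! A preenvelope `e : ∏ i, f i ⟶ E` lets every projection `∏ i, f i ⟶ f i` factor through `e`, since
`f i ∈ C`. The factorizations assemble into a map `r : E ⟶ ∏ i, f i` with `e ≫ r = 𝟙`, so the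
product is a direct summand of `E ∈ C`. -/

namespace ModuleCat

variable {R : Type u} [Ring R]

def IsPreenvelope (C : ModuleCat.{u} R → Prop) {M E : ModuleCat.{u} R} (e : M ⟶ E) : Prop :=
  C E ∧ ∀ (E' : ModuleCat.{u} R), C E' → ∀ g : M ⟶ E', ∃ h : E ⟶ E', e ≫ h = g

theorem IsPreenvelope.exists_comp_eq_of_pi {C : ModuleCat.{u} R → Prop} {M E : ModuleCat.{u} R}
    {e : M ⟶ E} (he : IsPreenvelope C e) {ι : Type u} {f : ι → ModuleCat.{u} R}
    (hf : ∀ i, C (f i)) (g : M ⟶ ModuleCat.of R (∀ i, f i)) :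
    ∃ h : E ⟶ ModuleCat.of R (∀ i, f i), e ≫ h = g := by
  choose h hh using fun i => he.2 (f i) (hf i) (g ≫ ofHom (LinearMap.proj i))
  refine ⟨ofHom (LinearMap.pi fun i => (h i).hom), ?_⟩
  ext x i
  exact congr($(hh i) x)

end ModuleCat

theorem Preenveloping.exists_isPreenvelope {R : Type u} [Ring R] {C : ModuleCat.{u} R → Prop}
    (henv : Preenveloping C) (M : ModuleCat.{u} R) :
    ∃ (E : ModuleCat.{u} R) (e : M ⟶ E), ModuleCat.IsPreenvelope C e :=
  henv M

theorem preenveloping_closed_under_products {R : Type u} [Ring R]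
    (C : ModuleCat.{u} R → Prop) (hsum : ClosedUnderSummands C) (henv : Preenveloping C)
    (ι : Type u) (f : ι → ModuleCat.{u} R) (hf : ∀ i, C (f i)) :
    C (ModuleCat.of R (∀ i, f i)) := by
  obtain ⟨E, e, he⟩ := henv.exists_isPreenvelope (ModuleCat.of R (∀ i, f i))
  obtain ⟨r, hr⟩ := he.exists_comp_eq_of_pi hf (𝟙 _)
  exact hsum E _ he.1 e r hr
end

section
/- Let R be a ring and C a class of right R-modules closed under submodules and arbitrary direct products. Then C is an enveloping class: every module N admits a C-envelope, namely the canonical projection π : N → N/Rej(N, C), where Rej(N, C) is the reject of C in N. -/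
open CategoryTheory

universe u

/-- A class of modules is closed under submodules (up to isomorphism): any module embedding
into a member of the class belongs to the class. -/
def ClosedUnderSubmodules {R : Type u} [Ring R] (C : ModuleCat.{u} R → Prop) : Prop :=
  ∀ (M : ModuleCat.{u} R), C M → ∀ (N : ModuleCat.{u} R) (i : ↥N →ₗ[R] ↥M),
    Function.Injective i → C N

/-- A class of modules is closed under arbitrary direct products. -/
def ClosedUnderProducts {R : Type u} [Ring R] (C : ModuleCat.{u} R → Prop) : Prop :=
  ∀ (ι : Type u) (f : ι → ModuleCat.{u} R), (∀ i, C (f i)) → C (ModuleCat.of R (∀ i, f i))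

theorem reject_is_envelope {R : Type u} [Ring R] (C : ModuleCat.{u} R → Prop)
    (hsub : ClosedUnderSubmodules C) (hprod : ClosedUnderProducts C)
    (N : ModuleCat.{u} R) :
    ∀ Rej : Submodule R ↥N,
      Rej = (⨅ (E : ModuleCat.{u} R) (_ : C E) (f : ↥N →ₗ[R] ↥E), LinearMap.ker f) →
      -- the codomain of the canonical projection lies in `C`
      C (ModuleCat.of R (↥N ⧸ Rej)) ∧
      -- the canonical projection is a `C`-preenvelope
      (∀ (E : ModuleCat.{u} R), C E → ∀ g : ↥N →ₗ[R] ↥E,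
        ∃ h : (↥N ⧸ Rej) →ₗ[R] ↥E, h.comp Rej.mkQ = g) ∧
      -- the canonical projection is left minimal, hence a `C`-envelope
      (∀ h : (↥N ⧸ Rej) →ₗ[R] (↥N ⧸ Rej), h.comp Rej.mkQ = Rej.mkQ →
        Function.Bijective h) := by
  intro Rej hRej
  have hle : ∀ (E : ModuleCat.{u} R), C E → ∀ f : ↥N →ₗ[R] ↥E,
      Rej ≤ LinearMap.ker f := by
    intro E hE f
    rw [hRej]
    exact iInf_le_of_le E (iInf_le_of_le hE (iInf_le _ f))
  set S : Set (Submodule R ↥N) := {K | C (ModuleCat.of R (↥N ⧸ K))} with hS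
  have hRejS : Rej = ⨅ K ∈ S, K := by
    apply le_antisymm
    · refine le_iInf fun K => le_iInf fun hK => ?_
      have := hle (ModuleCat.of R (↥N ⧸ K)) hK K.mkQ
      rwa [Submodule.ker_mkQ] at this
    · rw [hRej]
      refine le_iInf fun E => le_iInf fun hE => le_iInf fun f => ?_
      refine iInf_le_of_le (LinearMap.ker f) (iInf_le_of_le ?_ le_rfl)
      exact hsub E hE (ModuleCat.of R (↥N ⧸ LinearMap.ker f))
        ((LinearMap.ker f).liftQ f le_rfl)
        (by rw [← LinearMap.ker_eq_bot]
            exact Submodule.ker_liftQ_eq_bot _ _ le_rfl le_rfl)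
  have hProd : C (ModuleCat.of R
      (∀ K : S, ↥((fun K : S => ModuleCat.of R (↥N ⧸ (K : Submodule R ↥N))) K))) :=
    hprod S (fun K => ModuleCat.of R (↥N ⧸ (K : Submodule R ↥N))) (fun K => K.2)
  let Ψ : ↥N →ₗ[R] (∀ K : S, ↥N ⧸ (K : Submodule R ↥N)) :=
    LinearMap.pi (fun K => (K : Submodule R ↥N).mkQ)
  have hkerΨ : LinearMap.ker Ψ = Rej := by
    rw [hRejS, LinearMap.ker_pi]
    simp only [Submodule.ker_mkQ]
    exact (iInf_subtype'' S id).symm ▸ rfl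
  have hCquot : C (ModuleCat.of R (↥N ⧸ Rej)) := by
    refine hsub _ hProd (ModuleCat.of R (↥N ⧸ Rej)) (Rej.liftQ Ψ hkerΨ.ge) ?_
    rw [← LinearMap.ker_eq_bot]
    exact Submodule.ker_liftQ_eq_bot _ _ hkerΨ.ge hkerΨ.le
  refine ⟨hCquot, ?_, ?_⟩
  · intro E hE g
    exact ⟨Rej.liftQ g (hle E hE g), Submodule.liftQ_mkQ _ _ _⟩
  · intro h hh
    have : h = LinearMap.id := by
      refine Submodule.linearMap_qext _ ?_
      simpa using hh
    rw [this]
    exact Function.bijective_id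
end

section
/- Let R be a ring and C a class of right R-modules closed under submodules and homomorphic images. If C is precovering, then there is a right R-module M such that C = Gen(M), and moreover C equals the class σ[M] of modules subgenerated by M. -/
universe u

/-- A class of modules is precovering if every module has a `C`-precover. -/
def Precovering {R : Type u} [Ring R] (C : ModuleCat.{u} R → Prop) : Prop :=
  ∀ M : ModuleCat.{u} R, ∃ (P : ModuleCat.{u} R) (f : ↥P →ₗ[R] ↥M), C P ∧
    ∀ (P' : ModuleCat.{u} R), C P' → ∀ g : ↥P' →ₗ[R] ↥M,
      ∃ h : ↥P' →ₗ[R] ↥P, f.comp h = g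

/-- `Gen M`: epimorphic images of direct sums of copies of `M`. -/
def GenClass {R : Type u} [Ring R] (M : ModuleCat.{u} R) (N : ModuleCat.{u} R) : Prop :=
  ∃ (ι : Type u) (g : (DirectSum ι (fun _ : ι => ↥M)) →ₗ[R] ↥N), Function.Surjective g

/-- `σ[M]`: the class of modules subgenerated by `M`, i.e. submodules of modules
generated by `M`. -/
def SubGenClass {R : Type u} [Ring R] (M : ModuleCat.{u} R) (N : ModuleCat.{u} R) : Prop :=
  ∃ K : ModuleCat.{u} R, GenClass M K ∧ ∃ i : ↥N →ₗ[R] ↥K, Function.Injective i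

/-!
A precover of `⨁ Aᵢ` with all `Aᵢ ∈ C` must be onto, since every inclusion
`Aᵢ → ⨁ Aᵢ` factors through it; so `C` is closed under direct sums and hence
under `Gen`. Conversely every `N ∈ C` is generated by its cyclic submodules
`R ⧸ ann x`, which lie in `C`. Hence `C = Gen(M)` for `M` the direct sum of all
cyclic modules `R ⧸ I` in `C`, and `σ[M] = C` because `C` is closed under
submodules.
-/

open DirectSum

section

variable {R : Type u} [Ring R]

theorem DirectSum.surjective_of_lof_mem_range {ι : Type*} [DecidableEq ι] {A : ι → Type*}
    [∀ i, AddCommGroup (A i)] [∀ i, Module R (A i)] {P : Type*} [AddCommGroup P] [Module R P]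
    (f : P →ₗ[R] ⨁ i, A i) (hf : ∀ i x, lof R ι A i x ∈ LinearMap.range f) :
    Function.Surjective f := by
  intro z
  suffices z ∈ LinearMap.range f from this
  induction z using DirectSum.induction_on with
  | zero => exact zero_mem _
  | of i x => exact hf i x
  | add x y hx hy => exact add_mem hx hy

theorem genClass_of_forall_mem_range {M N : ModuleCat.{u} R}
    (h : ∀ n : N, ∃ φ : M →ₗ[R] N, n ∈ LinearMap.range φ) : GenClass M N := by
  classical
  choose φ hφ using h
  refine ⟨N, toModule R N N φ, fun n => ?_⟩
  obtain ⟨m, hm⟩ := hφ n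
  exact ⟨lof R N (fun _ => M) n m, by rw [toModule_lof, hm]⟩

namespace Precovering

variable {C : ModuleCat.{u} R → Prop} (hcov : Precovering C)
  (himg : ∀ (M : ModuleCat.{u} R), C M → ∀ (N : ModuleCat.{u} R) (g : ↥M →ₗ[R] ↥N),
    Function.Surjective g → C N)
include hcov himg

theorem directSum_mem {ι : Type u} [DecidableEq ι] (A : ι → ModuleCat.{u} R)
    (hA : ∀ i, C (A i)) : C (ModuleCat.of R (⨁ i, A i)) := by
  obtain ⟨P, f, hP, hfac⟩ := hcov (ModuleCat.of R (⨁ i, A i))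
  refine himg P hP _ f (DirectSum.surjective_of_lof_mem_range f fun i x => ?_)
  obtain ⟨g, hg⟩ := hfac (A i) (hA i) (lof R ι (fun i => A i) i)
  exact ⟨g x, by rw [← hg]; rfl⟩

theorem mem_of_genClass {M N : ModuleCat.{u} R} (hM : C M) (hN : GenClass M N) : C N := by
  classical
  obtain ⟨ι, g, hg⟩ := hN
  exact himg _ (hcov.directSum_mem himg (fun _ : ι => M) fun _ => hM) N g hg

end Precovering

noncomputable def cyclicGenerator (C : ModuleCat.{u} R → Prop) : ModuleCat.{u} R :=
  ModuleCat.of R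
    (⨁ I : {I : Submodule R R // C (ModuleCat.of R (R ⧸ I))}, ModuleCat.of R (R ⧸ I.1))

theorem genClass_cyclicGenerator_of_mem {C : ModuleCat.{u} R → Prop}
    (hsub : ∀ (M : ModuleCat.{u} R), C M → ∀ (N : ModuleCat.{u} R) (i : ↥N →ₗ[R] ↥M),
      Function.Injective i → C N)
    {N : ModuleCat.{u} R} (hN : C N) : GenClass (cyclicGenerator C) N := by
  classical
  refine genClass_of_forall_mem_range fun n => ?_
  let ann := LinearMap.ker (LinearMap.toSpanSingleton R N n)
  let ι : R ⧸ ann →ₗ[R] N := ann.liftQ (LinearMap.toSpanSingleton R N n) le_rfl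
  have hι : Function.Injective ι := by
    rw [← LinearMap.ker_eq_bot]
    exact Submodule.ker_liftQ_eq_bot _ _ _ le_rfl
  let I : {I : Submodule R R // C (ModuleCat.of R (R ⧸ I))} :=
    ⟨ann, hsub N hN (ModuleCat.of R (R ⧸ ann)) ι hι⟩
  let π : cyclicGenerator C →ₗ[R] R ⧸ ann :=
    component R _ (fun I => ModuleCat.of R (R ⧸ I.1)) I
  let e : cyclicGenerator C :=
    lof R _ (fun I => ModuleCat.of R (R ⧸ I.1)) I (Submodule.Quotient.mk 1)
  have hπ : π e = Submodule.Quotient.mk 1 := component.lof_self ..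
  exact ⟨ι ∘ₗ π, e, (congrArg ι hπ).trans (one_smul R n)⟩

end

theorem precovering_closed_sub_quot_eq_gen {R : Type u} [Ring R]
    (C : ModuleCat.{u} R → Prop)
    (hsub : ∀ (M : ModuleCat.{u} R), C M → ∀ (N : ModuleCat.{u} R) (i : ↥N →ₗ[R] ↥M),
      Function.Injective i → C N)
    (himg : ∀ (M : ModuleCat.{u} R), C M → ∀ (N : ModuleCat.{u} R) (g : ↥M →ₗ[R] ↥N),
      Function.Surjective g → C N)
    (hcov : Precovering C) :
    ∃ M : ModuleCat.{u} R, (∀ N, C N ↔ GenClass M N) ∧ (∀ N, C N ↔ SubGenClass M N) := by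
  classical
  have hM : C (cyclicGenerator C) :=
    hcov.directSum_mem himg (fun I : {I : Submodule R R // C (ModuleCat.of R (R ⧸ I))} =>
      ModuleCat.of R (R ⧸ I.1)) Subtype.prop
  have hgen : ∀ N, C N ↔ GenClass (cyclicGenerator C) N := fun N =>
    ⟨genClass_cyclicGenerator_of_mem hsub, hcov.mem_of_genClass himg hM⟩
  refine ⟨cyclicGenerator C, hgen, fun N => ⟨fun hN => ?_, ?_⟩⟩
  · exact ⟨N, (hgen N).1 hN, LinearMap.id, Function.injective_id⟩
  · rintro ⟨K, hK, i, hi⟩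
    exact hsub K ((hgen K).2 hK) N i hi
end

section
/- The abelian group ℚ is pure-injective but is not isomorphic to the character group N^+ = Hom_ℤ(N, ℚ/ℤ) of any abelian group N. -/
/-- The group `ℚ/ℤ`. -/
abbrev RatModInt : Type := ℚ ⧸ AddSubgroup.zmultiples (1 : ℚ)

/-- A morphism of abelian groups is a pure embedding if it is injective and
`f(A) ∩ nB = n·f(A)` for every integer `n`. -/
def IsPureEmbedding {A B : Type} [AddCommGroup A] [AddCommGroup B] (f : A →+ B) : Prop :=
  Function.Injective f ∧
    ∀ (n : ℤ) (a : A), (∃ b : B, f a = n • b) → ∃ a' : A, a = n • a'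

/-- An abelian group `Q` is pure-injective if it is injective with respect to all
pure embeddings. -/
def PureInjective (Q : Type) [AddCommGroup Q] : Prop :=
  ∀ (A B : Type) [AddCommGroup A] [AddCommGroup B] (f : A →+ B), IsPureEmbedding f →
    ∀ g : A →+ Q, ∃ h : B →+ Q, h.comp f = g

/-!
`ℚ` is divisible, hence injective, hence pure-injective.

Characters separate the points of an abelian group, so multiplication by `n` on `N` is surjective
(injective) exactly when it is injective (surjective) on `N⁺`. If `ℚ ≅ N⁺`, then `N` is therefore
torsion-free, divisible and nonzero, so it contains a copy of `ℚ`, and since `ℚ/ℤ` is injective,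
restriction maps the countable group `N⁺` onto `ℚ⁺`. But `ℚ⁺` is uncountable: a binary sequence `ε`
gives the character `q ↦ q · ∑_{j<n} ε_j (j+1)! mod ℤ` (any `n` with `q.den ∣ (n+1)!`), and distinct
sequences give distinct characters.
-/

open Finset
open scoped Nat

theorem PureInjective.of_divisibleBy (Q : Type) [AddCommGroup Q] [DivisibleBy Q ℤ] :
    PureInjective Q :=
  fun _ _ _ _ f hf g => (Module.Baer.of_divisible Q).extension_property_addMonoidHom f hf.1 g

namespace CharacterModule

variable {A : Type*} [AddCommGroup A]

lemma dual_nsmul (n : ℕ) (c : CharacterModule A) :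
    dual (DistribSMul.toLinearMap ℤ A n) c = n • c := by
  ext a
  exact map_nsmul c n a

lemma nsmul_injective_iff (n : ℕ) :
    Function.Injective (fun c : CharacterModule A => n • c) ↔
      Function.Surjective (fun a : A => n • a) := by
  simp_rw [← dual_nsmul]
  exact dual_injective_iff_surjective

lemma nsmul_surjective_iff (n : ℕ) :
    Function.Surjective (fun c : CharacterModule A => n • c) ↔
      Function.Injective (fun a : A => n • a) := by
  simp_rw [← dual_nsmul]
  exact dual_surjective_iff_injective

lemma isAddTorsionFree_of_divisibleBy [DivisibleBy (CharacterModule A) ℤ] :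
    IsAddTorsionFree A := by
  refine ⟨fun n hn => (nsmul_surjective_iff n).mp fun c => ?_⟩
  obtain ⟨d, hd⟩ :=
    DivisibleBy.surjective_smul (CharacterModule A) ℤ (Int.natCast_ne_zero.mpr hn) c
  exact ⟨d, by simpa only [natCast_zsmul] using hd⟩

noncomputable abbrev divisibleByOfIsAddTorsionFree [IsAddTorsionFree (CharacterModule A)] :
    DivisibleBy A ℤ :=
  let := divisibleByOfSMulRightSurj A ℕ fun hn =>
    (nsmul_injective_iff _).mp (IsAddTorsionFree.nsmul_right_injective hn)
  AddGroup.divisibleByIntOfDivisibleByNat A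

end CharacterModule

lemma exists_injective_rat_addMonoidHom {N : Type*} [AddCommGroup N] [IsAddTorsionFree N]
    [DivisibleBy N ℤ] {x : N} (hx : x ≠ 0) : ∃ f : ℚ →+ N, Function.Injective f := by
  obtain ⟨f, hf⟩ := (Module.Baer.of_divisible N).extension_property_addMonoidHom
    (Int.castAddHom ℚ) Int.cast_injective (zmultiplesHom N x)
  refine ⟨f, (injective_iff_map_eq_zero f).mpr fun q hq => ?_⟩
  have hnum : q.num • x = 0 := by
    rw [← zmultiplesHom_apply, ← hf]
    change f (q.num : ℚ) = 0
    rw [← Rat.mul_den_eq_num, mul_comm, ← nsmul_eq_mul, map_nsmul, hq, smul_zero]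
  simpa [hx] using hnum

/-- The weights `(j + 1)!` keep `factorialDigitSum ε n` below `(n + 1)!`, so that
`factorialDigitSum ε n / (n + 1)!` is the representative in `[0, 1)` of a class in `ℚ/ℤ`. -/
def factorialDigitSum (ε : ℕ → Bool) (n : ℕ) : ℕ :=
  ∑ j ∈ range n, if ε j then (j + 1)! else 0

lemma factorialDigitSum_succ (ε : ℕ → Bool) (n : ℕ) :
    factorialDigitSum ε (n + 1) = factorialDigitSum ε n + if ε n then (n + 1)! else 0 :=
  sum_range_succ _ _

lemma factorialDigitSum_lt_factorial (ε : ℕ → Bool) (n : ℕ) :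
    factorialDigitSum ε n < (n + 1)! := by
  induction n with
  | zero => simp [factorialDigitSum]
  | succ n ih =>
    rw [factorialDigitSum_succ, Nat.factorial_succ (n + 1)]
    split_ifs <;> nlinarith

lemma factorialDigitSum_modEq (ε : ℕ → Bool) {n m : ℕ} (h : n ≤ m) :
    factorialDigitSum ε n ≡ factorialDigitSum ε m [MOD (n + 1)!] := by
  induction m, h using Nat.le_induction with
  | base => rfl
  | succ m hnm ih =>
    rw [factorialDigitSum_succ]
    refine ih.trans (Nat.modEq_iff_dvd' (Nat.le_add_right _ _) |>.mpr ?_)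
    rw [Nat.add_sub_cancel_left]
    split_ifs
    · exact Nat.factorial_dvd_factorial (by omega)
    · exact dvd_zero _

lemma factorialDigitSum_injective : Function.Injective factorialDigitSum := by
  intro ε ε' h
  funext n
  have := congrFun h (n + 1)
  rw [factorialDigitSum_succ, factorialDigitSum_succ, congrFun h n,
    Nat.add_left_cancel_iff] at this
  revert this
  cases ε n <;> cases ε' n <;> simp [eq_comm (a := 0), Nat.factorial_ne_zero]

lemma AddCircle.coe_rat_mul_eq_zero_of_den_dvd {q : ℚ} {k : ℤ} (h : (q.den : ℤ) ∣ k) :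
    ((q * k : ℚ) : AddCircle (1 : ℚ)) = 0 := by
  obtain ⟨t, rfl⟩ := h
  rw [AddCircle.coe_eq_zero_iff]
  refine ⟨q.num * t, ?_⟩
  rw [zsmul_eq_mul, mul_one]
  push_cast
  rw [← mul_assoc, Rat.mul_den_eq_num]

lemma coe_mul_factorialDigitSum_eq (ε : ℕ → Bool) {q : ℚ} {n m : ℕ} (hnm : n ≤ m)
    (hq : q.den ∣ (n + 1)!) :
    ((q * factorialDigitSum ε n : ℚ) : AddCircle (1 : ℚ)) = (q * factorialDigitSum ε m : ℚ) := by
  rw [eq_comm, ← sub_eq_zero, ← AddCircle.coe_sub, ← mul_sub]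
  have hdvd := Nat.modEq_iff_dvd.mp (factorialDigitSum_modEq ε hnm)
  exact_mod_cast
    AddCircle.coe_rat_mul_eq_zero_of_den_dvd ((Int.natCast_dvd_natCast.mpr hq).trans hdvd)

lemma coe_mul_factorialDigitSum_den (ε : ℕ → Bool) {q : ℚ} {n : ℕ} (hq : q.den ∣ (n + 1)!) :
    ((q * factorialDigitSum ε q.den : ℚ) : AddCircle (1 : ℚ)) =
      (q * factorialDigitSum ε n : ℚ) := by
  have hden : q.den ∣ (q.den + 1)! := Nat.dvd_factorial q.pos (Nat.le_succ _)
  rcases le_total q.den n with h | h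
  · exact coe_mul_factorialDigitSum_eq ε h hden
  · exact (coe_mul_factorialDigitSum_eq ε h hq).symm

namespace CharacterModule

noncomputable def ofFactorialDigits (ε : ℕ → Bool) : CharacterModule ℚ :=
  AddMonoidHom.mk' (fun q => ((q * factorialDigitSum ε q.den : ℚ) : AddCircle (1 : ℚ)))
    fun a b => by
      have hdvd (q : ℚ) (hq : q.den ≤ a.den + b.den + (a + b).den + 1) :
          q.den ∣ (a.den + b.den + (a + b).den + 1)! :=
        Nat.dvd_factorial q.pos hq
      rw [coe_mul_factorialDigitSum_den ε (hdvd a (by omega)),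
        coe_mul_factorialDigitSum_den ε (hdvd b (by omega)),
        coe_mul_factorialDigitSum_den ε (hdvd (a + b) (by omega)), add_mul, AddCircle.coe_add]

lemma ofFactorialDigits_apply_inv_factorial (ε : ℕ → Bool) (n : ℕ) :
    ofFactorialDigits ε ((n + 1)! : ℚ)⁻¹ =
      ((factorialDigitSum ε n / (n + 1)! : ℚ) : AddCircle (1 : ℚ)) := by
  have hden : ((n + 1)! : ℚ)⁻¹.den = (n + 1)! := Rat.inv_natCast_den_of_pos (Nat.factorial_pos _)
  change ((_ * _ : ℚ) : AddCircle (1 : ℚ)) = _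
  rw [coe_mul_factorialDigitSum_den ε (n := n) (by rw [hden]), inv_mul_eq_div]

lemma ofFactorialDigits_injective : Function.Injective ofFactorialDigits := by
  intro ε ε' h
  apply factorialDigitSum_injective
  funext n
  have hmem (δ : ℕ → Bool) :
      (factorialDigitSum δ n / (n + 1)! : ℚ) ∈ Set.Ico 0 (0 + 1) := by
    rw [zero_add, Set.mem_Ico, div_lt_one (by positivity)]
    exact ⟨by positivity, mod_cast factorialDigitSum_lt_factorial δ n⟩
  have := DFunLike.congr_fun h ((n + 1)! : ℚ)⁻¹
  rw [ofFactorialDigits_apply_inv_factorial, ofFactorialDigits_apply_inv_factorial,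
    AddCircle.coe_eq_coe_iff_of_mem_Ico (hmem ε) (hmem ε'), div_left_inj' (by positivity)] at this
  exact_mod_cast this

end CharacterModule

open Cardinal in
instance : Uncountable (ℕ → Bool) := by
  rw [← aleph0_lt_mk_iff]
  simpa using cantor ℵ₀

instance : Uncountable (CharacterModule ℚ) :=
  CharacterModule.ofFactorialDigits_injective.uncountable

/-- `ℚ` is pure-injective but is not isomorphic to the character group
`N⁺ = Hom_ℤ(N, ℚ/ℤ)` of any abelian group `N`. -/
theorem rat_pureInjective_not_dual :
    PureInjective ℚ ∧
      ∀ (N : Type) [AddCommGroup N], IsEmpty (ℚ ≃+ (N →+ RatModInt)) := by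
  refine ⟨PureInjective.of_divisibleBy ℚ, fun N _ => ⟨fun e => ?_⟩⟩
  -- `RatModInt` unfolds to `AddCircle (1 : ℚ)`, so `N →+ RatModInt` is `CharacterModule N`.
  let e : ℚ ≃+ CharacterModule N := e
  have : IsAddTorsionFree (CharacterModule N) :=
    Function.Injective.isAddTorsionFree e.symm.toAddMonoidHom e.symm.injective
  let : DivisibleBy (CharacterModule N) ℤ :=
    e.surjective.divisibleBy _ fun q n => map_zsmul e n q
  have := CharacterModule.isAddTorsionFree_of_divisibleBy (A := N)
  let := CharacterModule.divisibleByOfIsAddTorsionFree (A := N)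
  obtain ⟨x, hx⟩ : ∃ x : N, x ≠ 0 := by
    by_contra! h
    exact one_ne_zero (e.injective (DFunLike.ext _ _ fun y => by simp [h y]))
  obtain ⟨f, hf⟩ := exists_injective_rat_addMonoidHom hx
  have : Countable (CharacterModule N) := Countable.of_equiv ℚ e.toEquiv
  exact not_countable (CharacterModule.dual_surjective_of_injective f.toIntLinearMap hf).countable
end

section
/- Let N be a nonzero torsion-free divisible abelian group. Then the character group N^+ = Hom_ℤ(N, ℚ/ℤ) is uncountable. Consequently, ℚ is not a dual group. -/
/-!
A nonzero torsion-free divisible group `N` surjects onto `ℚ` (extend `ℤ ≅ ℤ x₀ → ℚ` using that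
`ℚ` is injective), so `ℚ⁺` embeds into `N⁺`. For `ℚ⁺` itself, every `s ⊆ ℕ` gives the profinite
integer `∑_{k ∈ s} (k + 1)!`, which acts on `ℚ/ℤ`; composing with `ℚ → ℚ/ℤ` gives a character
of `ℚ`, and distinct `s` give distinct characters because factorial-base digits are unique. Finally, `A⁺` is torsion-free (divisible) as soon as `A` is
divisible (torsion-free), so `ℚ ≅ N'⁺` would make `N'` torsion-free divisible and nonzero,
forcing `ℚ` to be uncountable.
-/

open Nat Finset

def IntTorsionFree (A : Type*) [AddCommGroup A] : Prop :=
  ∀ n : ℤ, n ≠ 0 → ∀ x : A, n • x = 0 → x = 0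

def IntDivisible (A : Type*) [AddCommGroup A] : Prop :=
  ∀ n : ℤ, n ≠ 0 → ∀ x : A, ∃ y : A, n • y = x

section Transfer

variable {A B : Type*} [AddCommGroup A] [AddCommGroup B]

lemma IntTorsionFree.of_addEquiv (e : A ≃+ B) (hA : IntTorsionFree A) : IntTorsionFree B :=
  fun n hn x hx => e.symm.injective <| by
    rw [map_zero]; exact hA n hn _ (by rw [← map_zsmul, hx, map_zero])

lemma IntDivisible.of_addEquiv (e : A ≃+ B) (hA : IntDivisible A) : IntDivisible B := by
  intro n hn x
  obtain ⟨y, hy⟩ := hA n hn (e.symm x)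
  exact ⟨e y, by rw [← map_zsmul, hy, e.apply_symm_apply]⟩

end Transfer

lemma intTorsionFree_rat : IntTorsionFree ℚ := fun n hn x hx => by
  rw [zsmul_eq_mul] at hx
  exact (mul_eq_zero.mp hx).resolve_left (Int.cast_ne_zero.mpr hn)

lemma intDivisible_rat : IntDivisible ℚ := fun n hn x =>
  ⟨x / n, by rw [zsmul_eq_mul, mul_div_cancel₀ x (Int.cast_ne_zero.mpr hn)]⟩

lemma RatModInt.mk_eq_zero_iff {q : ℚ} : (q : RatModInt) = 0 ↔ ∃ z : ℤ, (z : ℚ) = q := by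
  simp [QuotientAddGroup.eq_zero_iff, AddSubgroup.mem_zmultiples_iff]

lemma RatModInt.mk_mul_intCast_eq_zero {q : ℚ} {z : ℤ} (h : (q.den : ℤ) ∣ z) :
    ((q * z : ℚ) : RatModInt) = 0 := by
  obtain ⟨k, rfl⟩ := h
  refine RatModInt.mk_eq_zero_iff.mpr ⟨q.num * k, ?_⟩
  rw [Int.cast_mul, Int.cast_mul, Int.cast_natCast, ← mul_assoc, mul_comm q, Rat.den_mul_eq_num]

section Characters

variable {A : Type*} [AddCommGroup A]

lemma exists_ratModInt_character_apply_ne_zero {x : A} (hx : x ≠ 0) :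
    ∃ χ : A →+ RatModInt, χ x ≠ 0 :=
  CharacterModule.exists_character_apply_ne_zero_of_ne_zero hx

lemma intTorsionFree_of_intDivisible_character (h : IntDivisible (A →+ RatModInt)) :
    IntTorsionFree A := by
  intro n hn x hx
  by_contra hx0
  obtain ⟨χ, hχ⟩ := exists_ratModInt_character_apply_ne_zero hx0
  obtain ⟨ψ, rfl⟩ := h n hn χ
  exact hχ (by rw [AddMonoidHom.zsmul_apply, ← map_zsmul, hx, map_zero])

lemma intDivisible_of_intTorsionFree_character (h : IntTorsionFree (A →+ RatModInt)) :
    IntDivisible A := by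
  intro n hn x
  by_contra! hx
  -- a character of `A / nA` that does not vanish at `x` is killed by `n`
  set H := (zsmulAddGroupHom n : A →+ A).range
  have hxH : (x : A ⧸ H) ≠ 0 := by
    rw [Ne, QuotientAddGroup.eq_zero_iff]
    rintro ⟨y, hy⟩
    exact hx y hy
  obtain ⟨χ, hχ⟩ := exists_ratModInt_character_apply_ne_zero hxH
  have hnχ : n • χ.comp (QuotientAddGroup.mk' H) = 0 := by
    ext y
    have hy : ((n • y : A) : A ⧸ H) = 0 := (QuotientAddGroup.eq_zero_iff _).mpr ⟨y, rfl⟩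
    rw [AddMonoidHom.zsmul_apply, ← map_zsmul, AddMonoidHom.comp_apply,
      QuotientAddGroup.mk'_apply, hy, map_zero, AddMonoidHom.zero_apply]
  exact hχ (DFunLike.congr_fun (h n hn _ hnχ) x)

end Characters

section RatCharacter

variable {c d : ℕ → ℤ}

lemma RatModInt.mk_mul_eq_of_den_le (hc : ∀ m m', m ≤ m' → (m ! : ℤ) ∣ c m' - c m) {q : ℚ}
    {m : ℕ} (h : q.den ≤ m) : ((q * c m : ℚ) : RatModInt) = ((q * c q.den : ℚ) : RatModInt) := by
  rw [← sub_eq_zero, ← QuotientAddGroup.mk_sub, ← mul_sub, ← Int.cast_sub]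
  exact RatModInt.mk_mul_intCast_eq_zero
    ((Int.natCast_dvd_natCast.mpr (Nat.dvd_factorial q.den_pos le_rfl)).trans (hc _ _ h))

/-- The character `q ↦ c • q` of `ℚ`, for the profinite integer `c` presented by integers
with `c m' ≡ c m [ZMOD m !]` whenever `m ≤ m'`. -/
def ratCharacter (c : ℕ → ℤ) (hc : ∀ m m', m ≤ m' → (m ! : ℤ) ∣ c m' - c m) :
    ℚ →+ RatModInt :=
  AddMonoidHom.mk' (fun q => ((q * c q.den : ℚ) : RatModInt)) fun a b => by
    have hd (q : ℚ) (hq : q.den ≤ a.den + b.den + (a + b).den) :=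
      RatModInt.mk_mul_eq_of_den_le hc hq
    rw [← hd (a + b) (by omega), ← hd a (by omega), ← hd b (by omega), add_mul,
      QuotientAddGroup.mk_add]

lemma ratCharacter_inv_natCast (hc : ∀ m m', m ≤ m' → (m ! : ℤ) ∣ c m' - c m) {m : ℕ}
    (hm : m ≠ 0) : ratCharacter c hc (m : ℚ)⁻¹ = (((m : ℚ)⁻¹ * c m : ℚ) : RatModInt) := by
  simp [ratCharacter, hm]

lemma factorial_dvd_sub_of_ratCharacter_eq (hc : ∀ m m', m ≤ m' → (m ! : ℤ) ∣ c m' - c m)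
    (hd : ∀ m m', m ≤ m' → (m ! : ℤ) ∣ d m' - d m) (h : ratCharacter c hc = ratCharacter d hd)
    (m : ℕ) : (m ! : ℤ) ∣ c m - d m := by
  have hM : (m ! : ℚ) ≠ 0 := by positivity
  have key : (m ! : ℤ) ∣ c m ! - d m ! := by
    have := DFunLike.congr_fun h (m ! : ℚ)⁻¹
    rw [ratCharacter_inv_natCast hc (factorial_ne_zero m),
      ratCharacter_inv_natCast hd (factorial_ne_zero m), ← sub_eq_zero,
      ← QuotientAddGroup.mk_sub, RatModInt.mk_eq_zero_iff] at this
    obtain ⟨z, hz⟩ := this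
    refine ⟨z, ?_⟩
    rw [← mul_sub, eq_inv_mul_iff_mul_eq₀ hM] at hz
    exact_mod_cast hz.symm
  have hle := self_le_factorial m
  have := dvd_add (dvd_sub key (hc _ _ hle)) (hd _ _ hle)
  rwa [show c m ! - d m ! - (c m ! - c m) + (d m ! - d m) = c m - d m by ring] at this

end RatCharacter

section FactorialSum

noncomputable def factorialTerm (s : Set ℕ) (k : ℕ) : ℤ := s.indicator (fun k => ((k + 1)! : ℤ)) k

noncomputable def factorialSum (s : Set ℕ) (m : ℕ) : ℤ := ∑ k ∈ range m, factorialTerm s k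

variable {s t : Set ℕ}

lemma factorialSum_succ (s : Set ℕ) (n : ℕ) :
    factorialSum s (n + 1) = factorialSum s n + factorialTerm s n :=
  sum_range_succ _ _

lemma factorial_dvd_factorialTerm (s : Set ℕ) {m k : ℕ} (h : m ≤ k + 1) :
    (m ! : ℤ) ∣ factorialTerm s k := by
  unfold factorialTerm
  by_cases hk : k ∈ s
  · rw [Set.indicator_of_mem hk]
    exact Int.natCast_dvd_natCast.mpr (factorial_dvd_factorial h)
  · rw [Set.indicator_of_notMem hk]
    exact dvd_zero _

lemma factorial_dvd_factorialSum_sub (s : Set ℕ) (m m' : ℕ) (h : m ≤ m') :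
    (m ! : ℤ) ∣ factorialSum s m' - factorialSum s m := by
  rw [factorialSum, factorialSum, ← sum_Ico_eq_sub _ h]
  exact dvd_sum fun k hk => factorial_dvd_factorialTerm s (by grind)

lemma factorialTerm_mem (s : Set ℕ) (n : ℕ) :
    factorialTerm s n ∈ Set.Icc (0 : ℤ) (n + 1)! := by
  unfold factorialTerm
  by_cases hn : n ∈ s <;> simp [hn]

lemma factorialTerm_eq_of_dvd {n : ℕ}
    (h : ((n + 2)! : ℤ) ∣ factorialTerm s n - factorialTerm t n) :
    factorialTerm s n = factorialTerm t n := by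
  have hlt : ((n + 1)! : ℤ) < (n + 2)! := by exact_mod_cast factorial_lt_of_lt (by omega) (by omega)
  obtain ⟨hs₀, hs₁⟩ := factorialTerm_mem s n
  obtain ⟨ht₀, ht₁⟩ := factorialTerm_mem t n
  exact sub_eq_zero.mp (Int.eq_zero_of_abs_lt_dvd h (abs_sub_lt_iff.mpr ⟨by omega, by omega⟩))

lemma eq_of_factorial_dvd_factorialSum_sub
    (h : ∀ m, (m ! : ℤ) ∣ factorialSum s m - factorialSum t m) : s = t := by
  have hsum : ∀ n, factorialSum s n = factorialSum t n := by
    intro n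
    induction n with
    | zero => simp [factorialSum]
    | succ n ih =>
      have hdvd := h (n + 2)
      rw [factorialSum_succ, factorialSum_succ, factorialSum_succ, factorialSum_succ, ih,
        show ∀ a b c d e : ℤ, a + b + c - (a + d + e) = (b - d) + (c - e) by intros; ring,
        dvd_add_left (dvd_sub (factorial_dvd_factorialTerm s le_rfl)
          (factorial_dvd_factorialTerm t le_rfl))] at hdvd
      rw [factorialSum_succ, factorialSum_succ, ih, factorialTerm_eq_of_dvd hdvd]
  ext n
  have hterm := hsum (n + 1)
  rw [factorialSum_succ, factorialSum_succ, hsum n, add_right_inj, factorialTerm,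
    factorialTerm] at hterm
  by_cases hs : n ∈ s <;> by_cases ht : n ∈ t <;>
    simp [hs, ht, factorial_ne_zero, eq_comm (a := (0 : ℤ))] at hterm ⊢

end FactorialSum

lemma injective_ratCharacter_factorialSum :
    Function.Injective fun s : Set ℕ =>
      ratCharacter (factorialSum s) (factorial_dvd_factorialSum_sub s) :=
  fun _ _ h => eq_of_factorial_dvd_factorialSum_sub (factorial_dvd_sub_of_ratCharacter_eq _ _ h)

lemma not_countable_rat_character : ¬ Countable (ℚ →+ RatModInt) := fun h => by
  obtain ⟨f, hf⟩ := injective_ratCharacter_factorialSum.countable.exists_injective_nat'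
  exact Function.cantor_injective f hf

lemma exists_surjective_addMonoidHom_rat (N : Type*) [AddCommGroup N] [Nontrivial N]
    (htf : IntTorsionFree N) (hdiv : IntDivisible N) : ∃ r : N →+ ℚ, Function.Surjective r := by
  obtain ⟨x, hx⟩ := exists_ne (0 : N)
  have hinj : Function.Injective (zmultiplesHom N x) :=
    (injective_iff_map_eq_zero _).mpr fun n hn => by_contra fun hn0 => hx (htf n hn0 x hn)
  obtain ⟨r, hr⟩ := (Module.Baer.of_divisible ℚ).extension_property_addMonoidHom _ hinj
    (Int.castAddHom ℚ)
  have hrx : r x = 1 := by simpa using DFunLike.congr_fun hr 1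
  refine ⟨r, fun q => ?_⟩
  obtain ⟨y, hy⟩ := hdiv q.den (by exact_mod_cast q.den_nz) x
  have hry : r y = (q.den : ℚ)⁻¹ := eq_inv_of_mul_eq_one_right <| by
    rw [← hrx, ← hy, map_zsmul, zsmul_eq_mul, Int.cast_natCast]
  refine ⟨q.num • y, ?_⟩
  rw [map_zsmul, zsmul_eq_mul, hry, ← div_eq_mul_inv, Rat.num_div_den]

lemma not_countable_character_of_intTorsionFree_of_intDivisible (N : Type*) [AddCommGroup N]
    [Nontrivial N] (htf : IntTorsionFree N) (hdiv : IntDivisible N) :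
    ¬ Countable (N →+ RatModInt) := fun h => by
  obtain ⟨r, hr⟩ := exists_surjective_addMonoidHom_rat N htf hdiv
  have hcomp : Function.Injective fun χ : ℚ →+ RatModInt => χ.comp r :=
    fun _ _ h => (AddMonoidHom.cancel_right hr).mp h
  exact not_countable_rat_character hcomp.countable

/-- The character group of a nonzero torsion-free divisible abelian group is uncountable;
consequently `ℚ` is not a dual group. -/
theorem character_group_of_torsionFree_divisible_uncountable
    (N : Type) [AddCommGroup N] [Nontrivial N]
    (htf : ∀ n : ℤ, n ≠ 0 → ∀ x : N, n • x = 0 → x = 0)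
    (hdiv : ∀ n : ℤ, n ≠ 0 → ∀ x : N, ∃ y : N, n • y = x) :
    ¬ Countable (N →+ RatModInt) ∧
      ∀ (N' : Type) [AddCommGroup N'], IsEmpty (ℚ ≃+ (N' →+ RatModInt)) := by
  refine ⟨not_countable_character_of_intTorsionFree_of_intDivisible N htf hdiv,
    fun N' _ => ⟨fun e => ?_⟩⟩
  have : Nontrivial N' :=
    not_subsingleton_iff_nontrivial.mp fun _ => not_subsingleton ℚ e.toEquiv.subsingleton
  exact not_countable_character_of_intTorsionFree_of_intDivisible N'
    (intTorsionFree_of_intDivisible_character (intDivisible_rat.of_addEquiv e))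
    (intDivisible_of_intTorsionFree_character (intTorsionFree_rat.of_addEquiv e))
    (Countable.of_equiv ℚ e.toEquiv)
end

section
/- Let R be a discrete valuation ring with completion R̂. If R̂ is ℵ₁-projective as an R-module (i.e., every countably generated submodule of R̂ is free), then R is complete, i.e., R = R̂. -/
open IsLocalRing

/-!
Write `x ∈ R̂` as `x = aₙ + πⁿ yₙ` with `aₙ ∈ R`. The span `N` of `1` and the `yₙ` is countably
generated, hence free, and since `1 ∉ 𝔪 R̂` some linear form `φ : N → R` has `φ 1 = 1`. Applying
`φ` to `πⁿ yₙ - y₀ = a₀ - aₙ` gives `aₙ ≡ a₀ + φ y₀ mod πⁿ` for every `n`, so `x = a₀ + φ y₀ ∈ R`.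
-/

theorem IsHausdorff.eq_of_forall_eq_add_pow_smul {R M : Type*} [CommRing R] [AddCommGroup M]
    [Module R M] {I : Ideal R} [IsHausdorff I M] {π : R} (hπ : π ∈ I) {x z : M}
    (h : ∀ n : ℕ, ∃ y : M, x = z + π ^ n • y) : x = z := by
  refine (IsHausdorff.eq_iff_smodEq (I := I)).mpr fun n => ?_
  obtain ⟨y, rfl⟩ := h n
  rw [SModEq.sub_mem, add_sub_cancel_left]
  exact Submodule.smul_mem_smul (Ideal.pow_mem_pow hπ n) Submodule.mem_top

theorem AdicCompletion.exists_eq_of_add_pow_smul {R M : Type*} [CommRing R] [AddCommGroup M]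
    [Module R M] {I : Ideal R} {π : R} (hI : I = Ideal.span {π}) (x : AdicCompletion I M)
    (n : ℕ) : ∃ (a : M) (y : AdicCompletion I M), x = of I M a + π ^ n • y := by
  subst hI
  obtain ⟨a, ha⟩ := Submodule.Quotient.mk_surjective _ (x.val n)
  have hker : x - of _ M a ∈ (Ideal.span {π} ^ n • ⊤ : Submodule R (AdicCompletion _ M)) := by
    rw [pow_smul_top_eq_ker_eval (Submodule.fg_span_singleton π), LinearMap.mem_ker, map_sub,
      eval_of, eval_apply, ← ha, Submodule.mkQ_apply, sub_self]
  rw [Ideal.span_singleton_pow, Submodule.ideal_span_singleton_smul,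
    Submodule.mem_smul_pointwise_iff_exists] at hker
  obtain ⟨y, -, hy⟩ := hker
  exact ⟨a, y, by rw [hy, add_sub_cancel]⟩

theorem Module.Free.exists_linearMap_eq_one_of_notMem_smul_top {R N : Type*} [CommRing R]
    [IsLocalRing R] [AddCommGroup N] [Module R N] [Module.Free R N] {e : N}
    (he : e ∉ maximalIdeal R • (⊤ : Submodule R N)) : ∃ φ : N →ₗ[R] R, φ e = 1 := by
  let b := Module.Free.chooseBasis R N
  obtain ⟨i, hi⟩ : ∃ i, IsUnit (b.coord i e) := by
    by_contra! hcoord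
    refine he ?_
    rw [← b.linearCombination_repr e, Finsupp.linearCombination_apply]
    exact Submodule.sum_mem _ fun i _ =>
      Submodule.smul_mem_smul (hcoord i) Submodule.mem_top
  exact ⟨(hi.unit⁻¹ : Rˣ) • b.coord i, by simp [Units.smul_def]⟩

theorem AdicCompletion.one_notMem_maximalIdeal_smul_top {R : Type*} [CommRing R]
    [IsLocalRing R] [IsNoetherianRing R] :
    (1 : AdicCompletion (maximalIdeal R) R) ∉
      maximalIdeal R • (⊤ : Submodule R (AdicCompletion (maximalIdeal R) R)) := by
  rw [Ideal.smul_top_eq_map, Submodule.restrictScalars_mem, ← maximalIdeal_eq_map]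
  exact notMem_maximalIdeal.mpr isUnit_one

theorem AdicCompletion.mem_range_of_free_span {R : Type*} [CommRing R] [IsLocalRing R]
    [IsNoetherianRing R] {π : R} (hπ : π ∈ maximalIdeal R)
    {x : AdicCompletion (maximalIdeal R) R} (a : ℕ → R) (y : ℕ → AdicCompletion (maximalIdeal R) R)
    (hxy : ∀ n, x = of _ R (a n) + π ^ n • y n)
    [Module.Free R (Submodule.span R (insert 1 (Set.range y)))] :
    x ∈ Set.range (of (maximalIdeal R) R) := by
  set N := Submodule.span R (insert 1 (Set.range y))
  have hof : ∀ r, of (maximalIdeal R) R r = r • 1 := fun r => by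
    rw [← Algebra.algebraMap_eq_smul_one, algebraMap_apply, Algebra.algebraMap_self,
      RingHom.id_apply]
  simp only [hof] at hxy
  have h1 : (1 : AdicCompletion (maximalIdeal R) R) ∈ N :=
    Submodule.subset_span (Set.mem_insert _ _)
  have hy : ∀ n, y n ∈ N := fun n => Submodule.subset_span (Set.mem_insert_of_mem _ ⟨n, rfl⟩)
  obtain ⟨φ, hφ⟩ := Module.Free.exists_linearMap_eq_one_of_notMem_smul_top
      (e := (⟨1, h1⟩ : N)) <| by
    rw [Submodule.mem_smul_top_iff]
    exact fun h => one_notMem_maximalIdeal_smul_top (Submodule.smul_mono le_rfl le_top h)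
  have hφy : ∀ n, π ^ n * φ ⟨y n, hy n⟩ = φ ⟨y 0, hy 0⟩ + (a 0 - a n) := by
    intro n
    have hrel : π ^ n • (⟨y n, hy n⟩ : N) = ⟨y 0, hy 0⟩ + (a 0 - a n) • ⟨1, h1⟩ := by
      ext1
      simp only [Submodule.coe_smul, Submodule.coe_add]
      linear_combination (norm := module) hxy 0 - hxy n
    have := congrArg φ hrel
    rwa [map_smul, map_add, map_smul, hφ, smul_eq_mul, smul_eq_mul, mul_one] at this
  refine ⟨a 0 + φ ⟨y 0, hy 0⟩, .symm <| IsHausdorff.eq_of_forall_eq_add_pow_smul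
    (I := maximalIdeal R) hπ fun n => ⟨y n - φ ⟨y n, hy n⟩ • 1, ?_⟩⟩
  rw [hxy n, hof]
  linear_combination (norm := module) (hφy n) • (1 : AdicCompletion (maximalIdeal R) R)

/-- If the completion `R̂` of a discrete valuation ring `R` is ℵ₁-projective as an
`R`-module (every countably generated submodule is free), then `R` is complete. -/
theorem dvr_complete_of_completion_aleph1_projective
    (R : Type) [CommRing R] [IsDomain R] [IsDiscreteValuationRing R]
    (haleph : ∀ N : Submodule R (AdicCompletion (maximalIdeal R) R),
      (∃ S : Set (AdicCompletion (maximalIdeal R) R), S.Countable ∧ Submodule.span R S = N) →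
      Module.Free R ↥N) :
    IsAdicComplete (maximalIdeal R) R := by
  obtain ⟨π, hπ⟩ := IsDiscreteValuationRing.exists_irreducible R
  have hI := (IsDiscreteValuationRing.irreducible_iff_uniformizer π).mp hπ
  refine AdicCompletion.of_bijective_iff.mp ⟨AdicCompletion.of_injective _ _, fun x => ?_⟩
  choose a y hxy using AdicCompletion.exists_eq_of_add_pow_smul hI x
  have hfree := haleph _ ⟨_, (Set.countable_range y).insert 1, rfl⟩
  exact AdicCompletion.mem_range_of_free_span (hI ▸ Ideal.mem_span_singleton_self π) a y hxy
end
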